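/- Let G be a finite connected graph with positive edge weights x. Then (J_x γ_1 ∧ … ∧ J_x γ_{b1}) ∧ (κ_1 ∧ … ∧ κ_{|V|−1}) = ± (Π_{e∈E⁺} x_e)^{−1} · (Σ_{T spanning tree} Π_{e∈T} x_e) · e*_{E⁺}, where (γ_i) is any integral basis of the cycle group, (κ_j) any integral basis of the cut group, J_x sends edge e to x_e^{−1} e*, and e*_{E⁺} is the wedge of all dual edge vectors. In particular the norm of the left-hand side equals (Π_e x_e)^{−1/2} · Σ_T Π_{e∈T} x_e. -/

import Mathlib

/-
Let `X = diagonal x` and let `Γ`, `K` be the integral matrices whose columns are the `γ_i` and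
the `κ_j`, so that `N = [X⁻¹ Γ | K]` up to a permutation of columns. Cycles are orthogonal to
cuts, so `Nᵀ X N` is block diagonal and `det N ^ 2 · ∏ x = det (Γᵀ X⁻¹ Γ) · det (Kᵀ X K)`.
By Cauchy–Binet each factor is a weighted sum of squared maximal minors. A maximal minor of `K`
is `±1` on a spanning tree (the fundamental cuts give it an integral inverse) and `0` on any
other `|V| - 1` edges (some nonzero cut vanishes on them); dually a maximal minor of `Γ` is `±1`
on the complement of a spanning tree (fundamental cycles) and `0` otherwise. Hence, with `τ` the
weighted tree sum, `det (Kᵀ X K) = τ`, `det (Γᵀ X⁻¹ Γ) = (∏ x)⁻¹ τ` and `det N = ±(∏ x)⁻¹ τ`.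
-/

/-! Framework: finite graph `(V, E, head, tail)`; `C₁(G,ℤ)` and `C¹(G,ℤ)` are both
modeled as `E → ℤ` (edge and dual-edge coordinates). -/

section Graph

variable {V E : Type*} [Fintype V] [Fintype E] [DecidableEq V] [DecidableEq E]

/-- The boundary operator `∂`; its kernel is the cycle group `Z₁(G,ℤ)`. -/
def bd (head tail : E → V) : (E → ℤ) →ₗ[ℤ] (V → ℤ) where
  toFun c := fun v => ∑ e, c e *
    ((if head e = v then 1 else 0) - (if tail e = v then 1 else 0))
  map_add' c d := by
    funext v
    simp [add_mul, Finset.sum_add_distrib]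
  map_smul' r c := by
    funext v
    simp [Finset.mul_sum, mul_assoc]

/-- The coboundary operator `δ`; its image is the cut group `B¹(G,ℤ)`. -/
def cobd (head tail : E → V) : (V → ℤ) →ₗ[ℤ] (E → ℤ) where
  toFun f := fun e => f (head e) - f (tail e)
  map_add' f g := by funext e; simp; ring
  map_smul' r f := by funext e; simp [mul_sub]

/-- Two vertices are connected through the edges of `T`. -/
def Conn (head tail : E → V) (T : Finset E) (v w : V) : Prop :=
  Relation.ReflTransGen
    (fun a b => ∃ e ∈ T, (head e = a ∧ tail e = b) ∨ (head e = b ∧ tail e = a)) v w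

/-- `T` is a spanning tree. -/
def IsSpanningTree (head tail : E → V) (T : Finset E) : Prop :=
  T.card + 1 = Fintype.card V ∧ ∀ v w : V, Conn head tail T v w

end Graph

open Classical

open Finset Matrix

section Connectivity

variable {V E : Type*} {head tail : E → V} {S : Finset E} {v w : V}

theorem Conn.symm (h : Conn head tail S v w) : Conn head tail S w v := by
  induction h with
  | refl => exact .refl
  | tail _ hstep ih =>
    obtain ⟨e, he, hends⟩ := hstep
    exact .head ⟨e, he, hends.symm⟩ ih

theorem Conn.apply_eq {β : Type*} {f : V → β} (hf : ∀ e ∈ S, f (head e) = f (tail e))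
    (h : Conn head tail S v w) : f v = f w := by
  induction h with
  | refl => rfl
  | tail _ hstep ih =>
    obtain ⟨e, he, ⟨rfl, rfl⟩ | ⟨rfl, rfl⟩⟩ := hstep
    exacts [ih.trans (hf e he), ih.trans (hf e he).symm]

theorem Conn.of_forall_of_erase [DecidableEq E] {e₀ : E}
    (h₀ : Conn head tail (S.erase e₀) (head e₀) (tail e₀)) (h : Conn head tail S v w) :
    Conn head tail (S.erase e₀) v w := by
  induction h with
  | refl => exact .refl
  | tail _ hstep ih =>
    obtain ⟨e, he, hends⟩ := hstep
    by_cases he₀ : e = e₀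
    · subst he₀
      obtain ⟨rfl, rfl⟩ | ⟨rfl, rfl⟩ := hends
      exacts [ih.trans h₀, ih.trans h₀.symm]
    · exact ih.tail ⟨e, mem_erase.mpr ⟨he₀, he⟩, hends⟩

variable [Fintype V]

theorem card_le_card_add_one_of_conn (h : ∀ v w, Conn head tail S v w) :
    Fintype.card V ≤ #S + 1 := by
  rcases isEmpty_or_nonempty V with hV | hV
  · simp
  let G := SimpleGraph.fromEdgeSet
    ((S.image fun e => s(head e, tail e) : Finset (Sym2 V)) : Set (Sym2 V))
  have hG : G.Connected := by
    refine SimpleGraph.connected_iff_exists_forall_reachable _ |>.mpr ⟨hV.some, fun w => ?_⟩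
    induction h hV.some w with
    | refl => rfl
    | @tail a b _ hstep ih =>
      obtain ⟨e, he, hends⟩ := hstep
      refine ih.trans ?_
      by_cases hab : a = b
      · rw [hab]
      refine SimpleGraph.Adj.reachable ?_
      simp only [G, SimpleGraph.fromEdgeSet_adj, coe_image, Set.mem_image, mem_coe]
      refine ⟨⟨e, he, ?_⟩, hab⟩
      rcases hends with ⟨rfl, rfl⟩ | ⟨rfl, rfl⟩
      exacts [rfl, Sym2.eq_swap]
  calc Fintype.card V = Nat.card V := Nat.card_eq_fintype_card.symm
    _ ≤ Nat.card G.edgeSet + 1 := hG.card_vert_le_card_edgeSet_add_one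
    _ ≤ #S + 1 := by
      gcongr
      rw [SimpleGraph.edgeSet_fromEdgeSet]
      calc _ ≤ Nat.card ((S.image fun e => s(head e, tail e) : Finset (Sym2 V)) : Set (Sym2 V)) :=
            Nat.card_mono (Set.toFinite _) Set.sdiff_subset
        _ ≤ #S := by simpa using card_image_le

theorem IsSpanningTree.not_conn_erase [DecidableEq E] {T : Finset E}
    (hT : IsSpanningTree head tail T) {e₀ : E} (he₀ : e₀ ∈ T) :
    ¬ Conn head tail (T.erase e₀) (head e₀) (tail e₀) := fun h₀ => by
  have := card_le_card_add_one_of_conn fun v w => h₀.of_forall_of_erase (hT.2 v w)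
  have := hT.1
  have := card_erase_add_one he₀
  omega

end Connectivity

section Chains

variable {V E : Type*} {head tail : E → V} {S : Finset E}

theorem cobd_apply (f : V → ℤ) (e : E) : cobd head tail f e = f (head e) - f (tail e) := rfl

theorem cobd_indicator_conn_eq_zero (v₀ : V) {e : E} (he : e ∈ S) :
    cobd head tail (fun v => if Conn head tail S v₀ v then 1 else 0) e = 0 := by
  have hstep : Conn head tail S (head e) (tail e) := .single ⟨e, he, .inl ⟨rfl, rfl⟩⟩
  have : Conn head tail S v₀ (head e) ↔ Conn head tail S v₀ (tail e) :=
    ⟨(·.trans hstep), (·.trans hstep.symm)⟩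
  simp [cobd_apply, this]

theorem IsSpanningTree.exists_cobd_eq_indicator [Fintype V] [DecidableEq E] {T : Finset E}
    (hT : IsSpanningTree head tail T) {e₀ : E} (he₀ : e₀ ∈ T) :
    ∃ f : V → ℤ, ∀ e ∈ T, cobd head tail f e = if e = e₀ then 1 else 0 := by
  refine ⟨fun v => if Conn head tail (T.erase e₀) (head e₀) v then 1 else 0, fun e he => ?_⟩
  split_ifs with h
  · subst h
    have hrefl : Conn head tail (T.erase e) (head e) (head e) := .refl
    simp [cobd_apply, hrefl, hT.not_conn_erase he]
  · exact cobd_indicator_conn_eq_zero _ (mem_erase.mpr ⟨h, he⟩)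

theorem exists_cobd_ne_zero_of_not_conn [Fintype E]
    (hconn : ∀ v w : V, Conn head tail (Finset.univ : Finset E) v w)
    (hS : ¬ ∀ v w : V, Conn head tail S v w) :
    ∃ f : V → ℤ, cobd head tail f ≠ 0 ∧ ∀ e ∈ S, cobd head tail f e = 0 := by
  push Not at hS
  obtain ⟨v₀, w₀, hv₀w₀⟩ := hS
  refine ⟨_, fun h0 => ?_, fun e he => cobd_indicator_conn_eq_zero v₀ he⟩
  have := (hconn v₀ w₀).apply_eq
    (f := fun v => if Conn head tail S v₀ v then (1 : ℤ) else 0)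
    fun e _ => sub_eq_zero.mp (congrFun h0 e)
  have hrefl : Conn head tail S v₀ v₀ := .refl
  simp [hrefl, hv₀w₀] at this

variable [Fintype E] [DecidableEq V]

theorem sum_mul_cobd [Fintype V] (z : E → ℤ) (f : V → ℤ) :
    ∑ e, z e * cobd head tail f e = ∑ v, bd head tail z v * f v := by
  simp only [bd, LinearMap.coe_mk, AddHom.coe_mk, cobd_apply, sum_mul, mul_assoc, mul_sub,
    sub_mul, ite_mul, one_mul, zero_mul, sum_sub_distrib]
  congr 1 <;> rw [sum_comm] <;> simp

theorem sum_mul_cobd_eq_zero [Fintype V] {z : E → ℤ} (hz : bd head tail z = 0) (f : V → ℤ) :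
    ∑ e, z e * cobd head tail f e = 0 := by
  simp [sum_mul_cobd, hz]

variable [DecidableEq E]

theorem bd_single (e : E) :
    bd head tail (Pi.single e 1) = Pi.single (head e) 1 - Pi.single (tail e) 1 := by
  ext v
  simp [bd, Pi.single_apply, eq_comm]

theorem Conn.exists_bd_eq {a b : V} (h : Conn head tail S a b) :
    ∃ z : E → ℤ, (∀ e ∉ S, z e = 0) ∧
      bd head tail z = Pi.single b 1 - Pi.single a 1 := by
  induction h with
  | refl => exact ⟨0, fun _ _ => rfl, by simp⟩
  | tail _ hstep ih =>
    obtain ⟨z, hz, hbd⟩ := ih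
    obtain ⟨e, he, ⟨rfl, rfl⟩ | ⟨rfl, rfl⟩⟩ := hstep
    · refine ⟨z - Pi.single e 1, fun e' he' => ?_, ?_⟩
      · simp [hz e' he', show e' ≠ e by rintro rfl; exact he' he]
      · rw [map_sub, hbd, bd_single]; abel
    · refine ⟨z + Pi.single e 1, fun e' he' => ?_, ?_⟩
      · simp [hz e' he', show e' ≠ e by rintro rfl; exact he' he]
      · rw [map_add, hbd, bd_single]; abel

theorem IsSpanningTree.exists_bd_eq_zero [Fintype V] {T : Finset E}
    (hT : IsSpanningTree head tail T) (e₀ : E) :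
    ∃ z : E → ℤ, bd head tail z = 0 ∧ ∀ e ∉ T, z e = if e = e₀ then 1 else 0 := by
  obtain ⟨z, hz, hbd⟩ := (hT.2 (head e₀) (tail e₀)).exists_bd_eq
  refine ⟨Pi.single e₀ 1 + z, ?_, fun e he => ?_⟩
  · rw [map_add, hbd, bd_single]; abel
  · simp [hz e he, Pi.single_apply]

end Chains

section CauchyBinet

open Function Equiv

variable {E : Type*} {m : ℕ}

noncomputable def finsetEnum (S : Finset E) (hS : #S = m) (i : Fin m) : E :=
  (S.equivFinOfCardEq hS).symm i

variable {S : Finset E} (hS : #S = m)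

theorem finsetEnum_injective : Injective (finsetEnum S hS) :=
  Subtype.val_injective.comp (S.equivFinOfCardEq hS).symm.injective

theorem finsetEnum_mem (i : Fin m) : finsetEnum S hS i ∈ S :=
  ((S.equivFinOfCardEq hS).symm i).2

theorem exists_finsetEnum_eq {e : E} (he : e ∈ S) : ∃ i, finsetEnum S hS i = e :=
  ⟨S.equivFinOfCardEq hS ⟨e, he⟩, by simp [finsetEnum]⟩

theorem prod_finsetEnum {M : Type*} [CommMonoid M] (f : E → M) :
    ∏ i, f (finsetEnum S hS i) = ∏ e ∈ S, f e := by
  rw [← S.prod_coe_sort]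
  exact (S.equivFinOfCardEq hS).symm.prod_comp (f ·)

theorem sum_finsetEnum {M : Type*} [AddCommMonoid M] (f : E → M) :
    ∑ i, f (finsetEnum S hS i) = ∑ e ∈ S, f e := by
  rw [← S.sum_coe_sort]
  exact (S.equivFinOfCardEq hS).symm.sum_comp (f ·)

theorem image_finsetEnum_comp [DecidableEq E] (π : Perm (Fin m)) :
    univ.image (finsetEnum S hS ∘ π) = S := by
  ext e
  simp only [mem_image, mem_univ, true_and, Function.comp_apply]
  refine ⟨fun ⟨i, hi⟩ => hi ▸ finsetEnum_mem hS _, fun he => ?_⟩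
  obtain ⟨i, rfl⟩ := exists_finsetEnum_eq hS he
  exact ⟨π.symm i, by simp⟩

variable [Fintype E] {R : Type*} [CommRing R]

theorem det_mul_eq_sum_prod_mul_det (B : Matrix (Fin m) E R) (C : Matrix E (Fin m) R) :
    (B * C).det = ∑ r : Fin m → E, (∏ i, B i (r i)) * (C.submatrix r id).det := by
  have hrows : B * C = fun i => ∑ e, B i e • C e := by
    ext i j
    simp [mul_apply, Finset.sum_apply]
  rw [hrows]
  change detRowAlternating.toMultilinearMap _ = _
  rw [MultilinearMap.map_sum]
  refine sum_congr rfl fun r _ => ?_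
  rw [MultilinearMap.map_smul_univ, smul_eq_mul]
  rfl

variable [DecidableEq E]

theorem sum_filter_injective_eq_sum_perm {M : Type*} [AddCommMonoid M] (g : (Fin m → E) → M) :
    ∑ r with Injective r, g r =
      ∑ S : {S : Finset E // #S = m}, ∑ π : Perm (Fin m), g (finsetEnum S.1 S.2 ∘ π) := by
  rw [sum_sigma', univ_sigma_univ]
  symm
  refine sum_bij (fun p _ => finsetEnum p.1.1 p.1.2 ∘ p.2) (fun p _ => ?_) ?_ (fun r hr => ?_)
    fun _ _ => rfl
  · simpa using (finsetEnum_injective p.1.2).comp p.2.injective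
  · rintro ⟨⟨S, hS⟩, π⟩ _ ⟨⟨S', hS'⟩, π'⟩ _ h
    obtain rfl : S = S' := by
      rw [← image_finsetEnum_comp hS π, ← image_finsetEnum_comp hS' π']
      exact congrArg (univ.image ·) h
    obtain rfl : π = π' := Equiv.ext fun i => finsetEnum_injective hS (congrFun h i)
    rfl
  · have hr : Injective r := (mem_filter.mp hr).2
    have hS : #(univ.image r) = m := by simp [card_image_of_injective _ hr]
    choose π hπ using fun i => exists_finsetEnum_eq hS (mem_image_of_mem r (mem_univ i))
    have hπ_inj : Injective π := fun i j hij => hr (by rw [← hπ i, ← hπ j, hij])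
    exact ⟨⟨⟨_, hS⟩, Equiv.ofBijective π hπ_inj.bijective_of_finite⟩, mem_univ _,
      funext hπ⟩

theorem det_mul_eq_sum_det_mul_det (B : Matrix (Fin m) E R) (C : Matrix E (Fin m) R) :
    (B * C).det = ∑ S : {S : Finset E // #S = m},
      (B.submatrix id (finsetEnum S.1 S.2)).det * (C.submatrix (finsetEnum S.1 S.2) id).det := by
  have hvanish (r : Fin m → E) (hr : ¬ Injective r) :
      (∏ i, B i (r i)) * (C.submatrix r id).det = 0 := by
    obtain ⟨i, j, hij, hne⟩ := Function.not_injective_iff.mp hr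
    rw [det_zero_of_row_eq hne (by ext; simp [hij]), mul_zero]
  rw [det_mul_eq_sum_prod_mul_det, ← sum_filter_of_ne fun r _ h => not_not.mp (mt (hvanish r) h),
    sum_filter_injective_eq_sum_perm]
  refine sum_congr rfl fun S _ => ?_
  set s := finsetEnum S.1 S.2
  calc ∑ π : Perm (Fin m), (∏ i, B i ((s ∘ π) i)) * (C.submatrix (s ∘ π) id).det
      = ∑ π : Perm (Fin m),
          (Perm.sign π • ∏ i, B i (s (π i))) * (C.submatrix s id).det := by
        refine sum_congr rfl fun π _ => ?_
        rw [show C.submatrix (s ∘ π) id = (C.submatrix s id).submatrix π id from rfl,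
          det_permute]
        simp only [Units.smul_def, zsmul_eq_mul, Function.comp_apply]
        ring
    _ = (B.submatrix id s).det * (C.submatrix s id).det := by
        rw [← sum_mul, ← det_transpose (B.submatrix id s), det_apply (B.submatrix id s)ᵀ]
        rfl

theorem det_transpose_mul_diagonal_mul (A : Matrix E (Fin m) R) (d : E → R) :
    (Aᵀ * diagonal d * A).det = ∑ S : {S : Finset E // #S = m},
      (∏ e ∈ S.1, d e) * (A.submatrix (finsetEnum S.1 S.2) id).det ^ 2 := by
  rw [det_mul_eq_sum_det_mul_det]
  refine sum_congr rfl fun S _ => ?_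
  have : (Aᵀ * diagonal d).submatrix id (finsetEnum S.1 S.2) =
      (A.submatrix (finsetEnum S.1 S.2) id)ᵀ * diagonal (d ∘ finsetEnum S.1 S.2) := by
    ext i j
    simp
  rw [this, det_mul, det_transpose, det_diagonal, Function.comp_def, prod_finsetEnum]
  ring

end CauchyBinet

theorem Matrix.isUnit_det_of_forall_exists_mulVec_eq_single {ι R : Type*} [Fintype ι]
    [DecidableEq ι] [CommRing R] (M : Matrix ι ι R)
    (h : ∀ i, ∃ c, M *ᵥ c = Pi.single i 1) :
    IsUnit M.det := by
  choose c hc using h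
  refine isUnit_det_of_right_inverse (B := of fun j i => c i j) ?_
  ext k i
  change (M *ᵥ c i) k = _
  rw [hc, Pi.single_apply, one_apply, eq_comm]

theorem Matrix.submatrix_id_mulVec_apply {ι κ E R : Type*} [Fintype ι] [CommSemiring R]
    (A : Matrix E ι R) (s : κ → E) (c : ι → R) (i : κ) :
    (A.submatrix s id *ᵥ c) i = A.mulVecLin c (s i) := rfl

section Orthogonality

variable {V E ι : Type*} [Fintype V] [Fintype E] [DecidableEq V] [Fintype ι] {head tail : E → V}
  {Γ : Matrix E ι ℤ} (hΓ : LinearMap.range Γ.mulVecLin = LinearMap.ker (bd head tail))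
include hΓ

theorem sum_col_mul_cobd_eq_zero (j : ι) (f : V → ℤ) :
    ∑ e, Γ e j * cobd head tail f e = 0 := by
  refine sum_mul_cobd_eq_zero (z := Γ.col j) ?_ f
  rw [← LinearMap.mem_ker, ← hΓ, ← mulVec_single_one]
  exact LinearMap.mem_range_self _ _

theorem cycles_transpose_mul_cuts_eq_zero {κ R : Type*} [Fintype κ] [DecidableEq κ] [CommRing R]
    {K : Matrix E κ ℤ} (hK : LinearMap.range K.mulVecLin = LinearMap.range (cobd head tail)) :
    (Γ.map (Int.cast : ℤ → R))ᵀ * K.map (Int.cast : ℤ → R) = 0 := by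
  ext i j
  obtain ⟨f, hf⟩ : K.col j ∈ LinearMap.range (cobd head tail) := by
    rw [← hK, ← mulVec_single_one]
    exact LinearMap.mem_range_self _ _
  have := sum_col_mul_cobd_eq_zero hΓ i f
  simp_rw [hf] at this
  simpa [mul_apply] using congrArg (Int.cast : ℤ → R) this

end Orthogonality

section Minors

variable {V E : Type*} [Fintype V] {head tail : E → V} {m : ℕ} {S : Finset E} (hS : #S = m)

section Cuts

variable {K : Matrix E (Fin m) ℤ}
  (hK : LinearMap.range K.mulVecLin = LinearMap.range (cobd head tail))
include hK

theorem isUnit_det_cut_minor (hT : IsSpanningTree head tail S) :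
    IsUnit (K.submatrix (finsetEnum S hS) id).det := by
  refine isUnit_det_of_forall_exists_mulVec_eq_single _ fun i₀ => ?_
  obtain ⟨f, hf⟩ := hT.exists_cobd_eq_indicator (finsetEnum_mem hS i₀)
  obtain ⟨c, hc⟩ : cobd head tail f ∈ LinearMap.range K.mulVecLin := hK ▸ ⟨f, rfl⟩
  refine ⟨c, funext fun i => ?_⟩
  rw [submatrix_id_mulVec_apply, hc, hf _ (finsetEnum_mem hS i)]
  simp [Pi.single_apply, (finsetEnum_injective hS).eq_iff]

theorem det_cut_minor_eq_zero [Fintype E]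
    (hconn : ∀ v w : V, Conn head tail (Finset.univ : Finset E) v w)
    (hSV : #S + 1 = Fintype.card V) (hT : ¬ IsSpanningTree head tail S) :
    (K.submatrix (finsetEnum S hS) id).det = 0 := by
  obtain ⟨f, hf, hfS⟩ := exists_cobd_ne_zero_of_not_conn hconn fun h => hT ⟨hSV, h⟩
  obtain ⟨c, hc⟩ : cobd head tail f ∈ LinearMap.range K.mulVecLin := hK ▸ ⟨f, rfl⟩
  refine exists_mulVec_eq_zero_iff.mp ⟨c, ?_, funext fun i => ?_⟩
  · rintro rfl
    exact hf (by simpa using hc.symm)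
  · rw [submatrix_id_mulVec_apply, hc]
    exact hfS _ (finsetEnum_mem hS i)

end Cuts

section Cycles

variable [Fintype E] [DecidableEq V] [DecidableEq E] {Γ : Matrix E (Fin m) ℤ}
  (hΓ : LinearMap.range Γ.mulVecLin = LinearMap.ker (bd head tail))
include hΓ

theorem isUnit_det_cycle_minor (hT : IsSpanningTree head tail Sᶜ) :
    IsUnit (Γ.submatrix (finsetEnum S hS) id).det := by
  refine isUnit_det_of_forall_exists_mulVec_eq_single _ fun i₀ => ?_
  obtain ⟨z, hz, hzT⟩ := hT.exists_bd_eq_zero (finsetEnum S hS i₀)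
  obtain ⟨c, hc⟩ : z ∈ LinearMap.range Γ.mulVecLin := hΓ ▸ hz
  refine ⟨c, funext fun i => ?_⟩
  rw [submatrix_id_mulVec_apply, hc, hzT _ (by simp [finsetEnum_mem hS i])]
  simp [Pi.single_apply, (finsetEnum_injective hS).eq_iff]

/-- A nonzero cut supported in `S` is orthogonal to every column of the minor. -/
theorem det_cycle_minor_eq_zero (hconn : ∀ v w : V, Conn head tail (Finset.univ : Finset E) v w)
    (hSV : #Sᶜ + 1 = Fintype.card V) (hT : ¬ IsSpanningTree head tail Sᶜ) :
    (Γ.submatrix (finsetEnum S hS) id).det = 0 := by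
  obtain ⟨f, hf, hfS⟩ := exists_cobd_ne_zero_of_not_conn hconn fun h => hT ⟨hSV, h⟩
  have hsupp : ∀ e ∉ S, cobd head tail f e = 0 := fun e he => hfS e (mem_compl.mpr he)
  refine exists_vecMul_eq_zero_iff.mp
    ⟨cobd head tail f ∘ finsetEnum S hS, ?_, funext fun j => ?_⟩
  · obtain ⟨e, he⟩ := Function.ne_iff.mp hf
    obtain ⟨i, rfl⟩ := exists_finsetEnum_eq hS (not_not.mp (mt (hsupp e) he))
    exact Function.ne_iff.mpr ⟨i, he⟩
  · calc (cobd head tail f ∘ finsetEnum S hS ᵥ* Γ.submatrix (finsetEnum S hS) id) j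
        = ∑ e ∈ S, cobd head tail f e * Γ e j :=
          sum_finsetEnum hS fun e => cobd head tail f e * Γ e j
      _ = ∑ e, Γ e j * cobd head tail f e := by
        rw [sum_subset (subset_univ S) fun e _ he => by simp [hsupp e he]]
        simp_rw [mul_comm]
      _ = 0 := sum_col_mul_cobd_eq_zero hΓ j f

end Cycles

end Minors

theorem sum_subtype_card_eq {E M : Type*} [Fintype E] [AddCommMonoid M] {m : ℕ}
    (g : Finset E → M) (hg : ∀ S, g S ≠ 0 → #S = m) :
    ∑ S : {S : Finset E // #S = m}, g S = ∑ S, g S := by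
  rw [← sum_filter_of_ne fun S _ h => hg S h]
  exact (sum_subtype _ (by simp) g).symm

section Gram

variable {V E : Type*} [Fintype V] [Fintype E] [DecidableEq E] {head tail : E → V} {m : ℕ}
  {R : Type*} [CommRing R]
  (hconn : ∀ v w : V, Conn head tail (Finset.univ : Finset E) v w)
include hconn

theorem det_cut_gram {K : Matrix E (Fin m) ℤ}
    (hK : LinearMap.range K.mulVecLin = LinearMap.range (cobd head tail))
    (hm : m + 1 = Fintype.card V) (d : E → R) :
    ((K.map (Int.cast : ℤ → R))ᵀ * diagonal d * (K.map Int.cast : Matrix E (Fin m) R)).det =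
      ∑ T, if IsSpanningTree head tail T then ∏ e ∈ T, d e else 0 := by
  rw [det_transpose_mul_diagonal_mul, ← sum_subtype_card_eq _ fun T hT => ?_]
  · refine sum_congr rfl fun S _ => ?_
    rw [submatrix_map, ← Int.cast_det]
    split_ifs with hT
    · rw [← Int.cast_pow, Int.isUnit_sq (isUnit_det_cut_minor S.2 hK hT), Int.cast_one, mul_one]
    · rw [det_cut_minor_eq_zero S.2 hK hconn (by omega) hT]
      simp
  · have := (ite_ne_right_iff.mp hT).1.1
    omega

theorem det_cycle_gram [DecidableEq V] {Γ : Matrix E (Fin m) ℤ}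
    (hΓ : LinearMap.range Γ.mulVecLin = LinearMap.ker (bd head tail))
    (hm : m + Fintype.card V = Fintype.card E + 1) (d : E → R) :
    ((Γ.map (Int.cast : ℤ → R))ᵀ * diagonal d * (Γ.map Int.cast : Matrix E (Fin m) R)).det =
      ∑ T, if IsSpanningTree head tail T then ∏ e ∈ Tᶜ, d e else 0 := by
  have hcard (S : Finset E) : #Sᶜ + #S = Fintype.card E := by
    rw [card_compl, Nat.sub_add_cancel (card_le_univ S)]
  calc _ = ∑ S : {S : Finset E // #S = m},
        if IsSpanningTree head tail S.1ᶜ then ∏ e ∈ S.1, d e else 0 := by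
        rw [det_transpose_mul_diagonal_mul]
        refine sum_congr rfl fun S _ => ?_
        rw [submatrix_map, ← Int.cast_det]
        split_ifs with hT
        · rw [← Int.cast_pow, Int.isUnit_sq (isUnit_det_cycle_minor S.2 hΓ hT), Int.cast_one,
            mul_one]
        · rw [det_cycle_minor_eq_zero S.2 hΓ hconn (by have := hcard S.1; have := S.2; omega) hT]
          simp
    _ = ∑ S, if IsSpanningTree head tail Sᶜ then ∏ e ∈ S, d e else 0 := by
        refine sum_subtype_card_eq (m := m)
          (fun S : Finset E => if IsSpanningTree head tail Sᶜ then ∏ e ∈ S, d e else 0)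
          fun S hS => ?_
        have := (ite_ne_right_iff.mp hS).1.1
        have := hcard S
        omega
    _ = _ := Fintype.sum_equiv (compl_involutive.toPerm _) _ _ fun S => by simp

end Gram

theorem det_gram_fromCols_of_transpose_mul_eq_zero {E ι κ K : Type*} [Fintype E] [DecidableEq E]
    [Fintype ι] [DecidableEq ι] [Fintype κ] [DecidableEq κ] [Field K]
    {P : Matrix E ι K} {Q : Matrix E κ K} (hPQ : Pᵀ * Q = 0) {x : E → K}
    (hx : ∀ e, x e ≠ 0) :
    ((fromCols (diagonal x⁻¹ * P) Q)ᵀ * diagonal x * fromCols (diagonal x⁻¹ * P) Q).det =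
      (Pᵀ * diagonal x⁻¹ * P).det * (Qᵀ * diagonal x * Q).det := by
  have hinv : diagonal x * diagonal x⁻¹ = 1 := by
    rw [diagonal_mul_diagonal, ← diagonal_one]
    exact congrArg diagonal (funext fun e => mul_inv_cancel₀ (hx e))
  have h₁₁ :
      (diagonal x⁻¹ * P)ᵀ * diagonal x * (diagonal x⁻¹ * P) = Pᵀ * diagonal x⁻¹ * P := by
    rw [transpose_mul, diagonal_transpose, Matrix.mul_assoc, Matrix.mul_assoc,
      ← Matrix.mul_assoc (diagonal x), hinv, Matrix.one_mul, Matrix.mul_assoc]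
  have h₂₁ : Qᵀ * diagonal x * (diagonal x⁻¹ * P) = 0 := by
    rw [Matrix.mul_assoc, ← Matrix.mul_assoc (diagonal x), hinv, Matrix.one_mul,
      ← transpose_transpose (Qᵀ * P), transpose_mul, transpose_transpose, hPQ, transpose_zero]
  rw [transpose_fromCols, fromRows_mul, fromRows_mul_fromCols, h₁₁, h₂₁,
    det_fromBlocks_zero₂₁]

theorem det_transpose_mul_diagonal_mul_submatrix {E ι κ R : Type*} [Fintype E] [DecidableEq E]
    [Fintype ι] [DecidableEq ι] [Fintype κ] [DecidableEq κ] [CommRing R]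
    (A : Matrix E ι R) (d : E → R) (σ : κ ≃ ι) :
    ((A.submatrix id σ)ᵀ * diagonal d * A.submatrix id σ).det =
      (Aᵀ * diagonal d * A).det := by
  have : (A.submatrix id σ)ᵀ * diagonal d * A.submatrix id σ =
      (Aᵀ * diagonal d * A).submatrix σ σ := by
    ext c c'
    simp [mul_apply]
  rw [this, det_submatrix_equiv_self]

theorem det_transpose_mul_diagonal_mul_self {E R : Type*} [Fintype E] [DecidableEq E]
    [CommRing R] (A : Matrix E E R) (d : E → R) :
    (Aᵀ * diagonal d * A).det = A.det ^ 2 * ∏ e, d e := by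
  rw [det_mul, det_mul, det_transpose, det_diagonal]
  ring

theorem sum_ite_prod_compl_inv {E K : Type*} [Fintype E] [DecidableEq E] [Field K]
    (p : Finset E → Prop) [DecidablePred p] {x : E → K} (hx : ∀ e, x e ≠ 0) :
    (∑ T, if p T then ∏ e ∈ Tᶜ, x⁻¹ e else 0) =
      (∏ e, x e)⁻¹ * ∑ T, if p T then ∏ e ∈ T, x e else 0 := by
  rw [mul_sum]
  refine sum_congr rfl fun T _ => ?_
  split_ifs
  · have : ∏ e ∈ T, x e ≠ 0 := prod_ne_zero_iff.mpr fun e _ => hx e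
    simp only [Pi.inv_apply, prod_inv_distrib, ← prod_mul_prod_compl T x, mul_inv]
    field_simp
  · rw [mul_zero]

theorem cycle_cut_torus_volume_general
    {V E : Type*} [Fintype V] [Fintype E] [DecidableEq V] [DecidableEq E]
    (head tail : E → V)
    (hconn : ∀ v w : V, Conn head tail (Finset.univ : Finset E) v w)
    (x : E → ℝ) (hx : ∀ e, 0 < x e)
    (b₁ n : ℕ) (hb₁ : b₁ + Fintype.card V = Fintype.card E + 1)
    (hn : n + 1 = Fintype.card V)
    (γ : Fin b₁ → (E → ℤ))
    (hγ_span : Submodule.span ℤ (Set.range γ) = LinearMap.ker (bd head tail))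
    (κ : Fin n → (E → ℤ))
    (hκ_span : Submodule.span ℤ (Set.range κ) = LinearMap.range (cobd head tail))
    (σ : (Fin b₁ ⊕ Fin n) ≃ E) :
    ∃ ε : ℝ, (ε = 1 ∨ ε = -1) ∧
      (Matrix.of fun e c : E =>
          Sum.elim (fun i => (x e)⁻¹ * (γ i e : ℝ)) (fun j => (κ j e : ℝ))
            (σ.symm c)).det =
        ε * (∏ e : E, x e)⁻¹ *
          (∑ T : Finset E,
            if IsSpanningTree head tail T then ∏ e ∈ T, x e else 0) ∧
      Real.sqrt
        (((Matrix.of fun e c : E =>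
            Sum.elim (fun i => (x e)⁻¹ * (γ i e : ℝ)) (fun j => (κ j e : ℝ))
              (σ.symm c)).transpose *
          Matrix.diagonal x *
          (Matrix.of fun e c : E =>
            Sum.elim (fun i => (x e)⁻¹ * (γ i e : ℝ)) (fun j => (κ j e : ℝ))
              (σ.symm c))).det) =
        Real.sqrt ((∏ e : E, x e)⁻¹) *
          (∑ T : Finset E,
            if IsSpanningTree head tail T then ∏ e ∈ T, x e else 0) := by
  set τ := ∑ T : Finset E, if IsSpanningTree head tail T then ∏ e ∈ T, x e else 0
  set Γ : Matrix E (Fin b₁) ℤ := of fun e i => γ i e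
  set K : Matrix E (Fin n) ℤ := of fun e j => κ j e
  set M := fromCols (diagonal x⁻¹ * Γ.map (Int.cast : ℤ → ℝ))
    (K.map (Int.cast : ℤ → ℝ))
  have hN : (of fun e c : E => Sum.elim (fun i => (x e)⁻¹ * (γ i e : ℝ))
      (fun j => (κ j e : ℝ)) (σ.symm c)) = M.submatrix id σ.symm := by
    ext e c
    simp only [of_apply, submatrix_apply, id_eq]
    rcases σ.symm c with i | j <;> simp [M, Γ, K, diagonal_mul]
  have hΓ : LinearMap.range Γ.mulVecLin = LinearMap.ker (bd head tail) :=
    (range_mulVecLin Γ).trans hγ_span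
  have hK : LinearMap.range K.mulVecLin = LinearMap.range (cobd head tail) :=
    (range_mulVecLin K).trans hκ_span
  have hx₀ : ∀ e, x e ≠ 0 := fun e => (hx e).ne'
  have hgram : ((M.submatrix id σ.symm)ᵀ * diagonal x * M.submatrix id σ.symm).det =
      (∏ e, x e)⁻¹ * τ ^ 2 := by
    rw [det_transpose_mul_diagonal_mul_submatrix,
      det_gram_fromCols_of_transpose_mul_eq_zero (cycles_transpose_mul_cuts_eq_zero hΓ hK) hx₀,
      det_cycle_gram hconn hΓ hb₁, det_cut_gram hconn hK hn, sum_ite_prod_compl_inv _ hx₀]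
    ring
  have hdet : (M.submatrix id σ.symm).det ^ 2 = ((∏ e, x e)⁻¹ * τ) ^ 2 := by
    have : ∏ e, x e ≠ 0 := prod_ne_zero_iff.mpr fun e _ => hx₀ e
    rw [det_transpose_mul_diagonal_mul_self] at hgram
    field_simp at hgram ⊢
    linear_combination hgram
  have hτ : 0 ≤ τ := sum_nonneg fun T _ => by
    split_ifs
    exacts [prod_nonneg fun e _ => (hx e).le, le_rfl]
  rw [hN, hgram, Real.sqrt_mul' _ (sq_nonneg τ), Real.sqrt_sq hτ]
  rcases sq_eq_sq_iff_eq_or_eq_neg.mp hdet with h | h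
  · exact ⟨1, .inl rfl, by rw [h]; ring, rfl⟩
  · exact ⟨-1, .inr rfl, by rw [h]; ring, rfl⟩

/-- **Cycle–cut torus volume identity.**
Let `(γ₁,…,γ_{b₁})` be an integral basis of the cycle group and `(κ₁,…,κ_{|V|−1})` an
integral basis of the cut group.  In the top exterior power of `C¹(G,ℝ)` (computed in
the dual edge basis, via the coordinate matrix `N` of the vectors
`J_x γ₁,…,J_x γ_{b₁}, κ₁,…,κ_{|V|−1}` with `J_x : e ↦ x_e⁻¹ e*`, for any indexing `σ`):
`J_xγ₁ ∧ … ∧ J_xγ_{b₁} ∧ κ₁ ∧ … ∧ κ_{|V|−1} = ± (Π_e x_e)⁻¹ (Σ_T Π_{e∈T} x_e) e*_{E⁺}`,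
i.e. `det N = ± (Π_e x_e)⁻¹ Σ_T x^T`; and the norm of the left-hand side (for the inner
product with `⟨e*,e*⟩ = x_e`, whose Gram matrix is `Nᵀ (diag x) N`) equals
`(Π_e x_e)^{-1/2} Σ_T x^T`. -/
theorem cycle_cut_torus_volume
    {V E : Type*} [Fintype V] [Fintype E] [DecidableEq V] [DecidableEq E]
    (head tail : E → V)
    (hconn : ∀ v w : V, Conn head tail (Finset.univ : Finset E) v w)
    (x : E → ℝ) (hx : ∀ e, 0 < x e)
    (b₁ n : ℕ) (hb₁ : b₁ + Fintype.card V = Fintype.card E + 1)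
    (hn : n + 1 = Fintype.card V)
    (γ : Fin b₁ → (E → ℤ))
    (hγ_indep : LinearIndependent ℤ γ)
    (hγ_span : Submodule.span ℤ (Set.range γ) = LinearMap.ker (bd head tail))
    (κ : Fin n → (E → ℤ))
    (hκ_indep : LinearIndependent ℤ κ)
    (hκ_span : Submodule.span ℤ (Set.range κ) = LinearMap.range (cobd head tail))
    (σ : (Fin b₁ ⊕ Fin n) ≃ E) :
    ∃ ε : ℝ, (ε = 1 ∨ ε = -1) ∧
      (Matrix.of fun e c : E =>
          Sum.elim (fun i => (x e)⁻¹ * (γ i e : ℝ)) (fun j => (κ j e : ℝ))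
            (σ.symm c)).det =
        ε * (∏ e : E, x e)⁻¹ *
          (∑ T : Finset E,
            if IsSpanningTree head tail T then ∏ e ∈ T, x e else 0) ∧
      Real.sqrt
        (((Matrix.of fun e c : E =>
            Sum.elim (fun i => (x e)⁻¹ * (γ i e : ℝ)) (fun j => (κ j e : ℝ))
              (σ.symm c)).transpose *
          Matrix.diagonal x *
          (Matrix.of fun e c : E =>
            Sum.elim (fun i => (x e)⁻¹ * (γ i e : ℝ)) (fun j => (κ j e : ℝ))
              (σ.symm c))).det) =
        Real.sqrt ((∏ e : E, x e)⁻¹) *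
          (∑ T : Finset E,
            if IsSpanningTree head tail T then ∏ e ∈ T, x e else 0) :=
  cycle_cut_torus_volume_general head tail hconn x hx b₁ n hb₁ hn γ hγ_span κ hκ_span σ
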